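/- arXiv:1112.4690 — 2 statements merged into one kernel-verified Lean document; each statement's English description precedes it below -/
import Mathlib

section
/- Schur orthogonality of matrix coefficients: for a compact group G with normalized Haar measure, and two non-isomorphic finite-dimensional irreducible unitary representations ρ and σ, the integral ∫_G ρ(g)_{αα'} · conj(σ(g)_{ββ'}) dμ(g) = 0 for all matrix indices α, α', β, β'. -/
open MeasureTheory Matrix

/-- Schur orthogonality of matrix coefficients: for a compact group `G` with
normalized Haar measure and two non-isomorphic irreducible continuous unitary
representations `ρ : G → U(n)`, `σ : G → U(m)`, the matrix coefficients are
orthogonal: `∫_G ρ(g)_{αα'} conj(σ(g)_{ββ'}) dμ(g) = 0` for all indices. -/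
theorem stmt_3 {G : Type*} [Group G] [TopologicalSpace G] [IsTopologicalGroup G]
    [CompactSpace G] [MeasurableSpace G] [BorelSpace G]
    (μ : Measure G) [μ.IsHaarMeasure] [IsProbabilityMeasure μ]
    (n m : ℕ)
    (ρ : G →* Matrix.unitaryGroup (Fin n) ℂ) (σ : G →* Matrix.unitaryGroup (Fin m) ℂ)
    (hcontρ : Continuous fun g => (ρ g : Matrix (Fin n) (Fin n) ℂ))
    (hcontσ : Continuous fun g => (σ g : Matrix (Fin m) (Fin m) ℂ))
    (hirrρ : ∀ U : Submodule ℂ (Fin n → ℂ),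
      (∀ g : G, ∀ v ∈ U, (ρ g : Matrix (Fin n) (Fin n) ℂ).mulVec v ∈ U) → U = ⊥ ∨ U = ⊤)
    (hirrσ : ∀ U : Submodule ℂ (Fin m → ℂ),
      (∀ g : G, ∀ v ∈ U, (σ g : Matrix (Fin m) (Fin m) ℂ).mulVec v ∈ U) → U = ⊥ ∨ U = ⊤)
    (hnoniso : ¬ ∃ T : (Fin n → ℂ) ≃ₗ[ℂ] (Fin m → ℂ), ∀ (g : G) (v : Fin n → ℂ),
      T ((ρ g : Matrix (Fin n) (Fin n) ℂ).mulVec v)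
        = (σ g : Matrix (Fin m) (Fin m) ℂ).mulVec (T v)) :
    ∀ (α α' : Fin n) (β β' : Fin m),
      (∫ g : G, (ρ g : Matrix (Fin n) (Fin n) ℂ) α α'
        * (starRingEnd ℂ) ((σ g : Matrix (Fin m) (Fin m) ℂ) β β') ∂μ) = 0 := by
  intro α α' β β'
  have hcont : ∀ (h : G) (a : Fin n) (b : Fin m), Continuous fun g : G =>
      (ρ g : Matrix (Fin n) (Fin n) ℂ) a α'
        * (starRingEnd ℂ) ((σ (h * g) : Matrix (Fin m) (Fin m) ℂ) b β') := by
    intro h a b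
    have h1 : Continuous fun g : G => (ρ g : Matrix (Fin n) (Fin n) ℂ) a α' :=
      hcontρ.matrix_elem a α'
    have h2 : Continuous fun g : G => (σ (h * g) : Matrix (Fin m) (Fin m) ℂ) b β' :=
      (hcontσ.comp (continuous_const.mul continuous_id)).matrix_elem b β'
    exact h1.mul (Complex.continuous_conj.comp h2)
  have hint : ∀ (h : G) (a : Fin n) (b : Fin m), Integrable (fun g : G =>
      (ρ g : Matrix (Fin n) (Fin n) ℂ) a α'
        * (starRingEnd ℂ) ((σ (h * g) : Matrix (Fin m) (Fin m) ℂ) b β')) μ := fun h a b =>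
    (hcont h a b).integrable_of_hasCompactSupport (HasCompactSupport.of_compactSpace _)
  set M : Matrix (Fin n) (Fin m) ℂ := Matrix.of fun a b =>
    ∫ g : G, (ρ g : Matrix (Fin n) (Fin n) ℂ) a α'
        * (starRingEnd ℂ) ((σ g : Matrix (Fin m) (Fin m) ℂ) b β') ∂μ with hMdef
  have hMentry : ∀ a b, M a b = ∫ g : G, (ρ g : Matrix (Fin n) (Fin n) ℂ) a α'
        * (starRingEnd ℂ) ((σ g : Matrix (Fin m) (Fin m) ℂ) b β') ∂μ := fun a b => rfl
  have hcomm : ∀ h : G, (ρ h : Matrix (Fin n) (Fin n) ℂ) * M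
      = M * (σ h : Matrix (Fin m) (Fin m) ℂ) := by
    intro h
    ext a b
    have hL : ((ρ h : Matrix (Fin n) (Fin n) ℂ) * M) a b
        = ∫ g : G, (ρ (h * g) : Matrix (Fin n) (Fin n) ℂ) a α'
            * (starRingEnd ℂ) ((σ g : Matrix (Fin m) (Fin m) ℂ) b β') ∂μ := by
      rw [Matrix.mul_apply]
      have key : ∀ k : Fin n, (ρ h : Matrix (Fin n) (Fin n) ℂ) a k * M k b
          = ∫ g : G, (ρ h : Matrix (Fin n) (Fin n) ℂ) a k
              * ((ρ g : Matrix (Fin n) (Fin n) ℂ) k α'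
                * (starRingEnd ℂ) ((σ g : Matrix (Fin m) (Fin m) ℂ) b β')) ∂μ := by
        intro k
        rw [hMentry, ← integral_const_mul]
      rw [Finset.sum_congr rfl fun k _ => key k, ← integral_finset_sum]
      · congr 1
        funext g
        rw [map_mul ρ h g, Matrix.UnitaryGroup.mul_val, Matrix.mul_apply, Finset.sum_mul]
        refine Finset.sum_congr rfl fun k _ => ?_
        ring
      · intro k _
        have := (hint 1 k b).const_mul ((ρ h : Matrix (Fin n) (Fin n) ℂ) a k)
        simpa [one_mul] using this
    have hR : (M * (σ h : Matrix (Fin m) (Fin m) ℂ)) a b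
        = ∫ g : G, (ρ g : Matrix (Fin n) (Fin n) ℂ) a α'
            * (starRingEnd ℂ) ((σ (h⁻¹ * g) : Matrix (Fin m) (Fin m) ℂ) b β') ∂μ := by
      rw [Matrix.mul_apply]
      have key : ∀ k : Fin m, M a k * (σ h : Matrix (Fin m) (Fin m) ℂ) k b
          = ∫ g : G, ((ρ g : Matrix (Fin n) (Fin n) ℂ) a α'
                * (starRingEnd ℂ) ((σ g : Matrix (Fin m) (Fin m) ℂ) k β'))
              * (σ h : Matrix (Fin m) (Fin m) ℂ) k b ∂μ := by
        intro k
        rw [hMentry, ← integral_mul_const]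
      rw [Finset.sum_congr rfl fun k _ => key k, ← integral_finset_sum]
      · congr 1
        funext g
        have hσ : (σ (h⁻¹ * g) : Matrix (Fin m) (Fin m) ℂ)
            = star (σ h : Matrix (Fin m) (Fin m) ℂ) * (σ g : Matrix (Fin m) (Fin m) ℂ) := by
          rw [map_mul σ h⁻¹ g, map_inv σ h, Matrix.UnitaryGroup.mul_val,
            Matrix.UnitaryGroup.inv_val]
        rw [hσ, Matrix.mul_apply, map_sum, Finset.mul_sum]
        refine Finset.sum_congr rfl fun k _ => ?_
        rw [_root_.map_mul]
        simp only [Matrix.star_apply, starRingEnd_apply, star_star]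
        ring
      · intro k _
        have := (hint 1 a k).mul_const ((σ h : Matrix (Fin m) (Fin m) ℂ) k b)
        simpa [one_mul] using this
    rw [hL, hR]
    have hinv := MeasureTheory.integral_mul_left_eq_self
      (μ := μ) (fun g : G => (ρ g : Matrix (Fin n) (Fin n) ℂ) a α'
        * (starRingEnd ℂ) ((σ (h⁻¹ * g) : Matrix (Fin m) (Fin m) ℂ) b β')) h
    rw [← hinv]
    congr 1
    funext g
    rw [inv_mul_cancel_left]
  -- Schur's lemma: M = 0
  have hmulvec : ∀ (h : G) (v : Fin m → ℂ),
      M.mulVec ((σ h : Matrix (Fin m) (Fin m) ℂ).mulVec v)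
        = (ρ h : Matrix (Fin n) (Fin n) ℂ).mulVec (M.mulVec v) := by
    intro h v
    rw [Matrix.mulVec_mulVec, Matrix.mulVec_mulVec, ← hcomm h]
  have hM0 : M = 0 := by
    by_contra hM
    have hinv1 : ∀ g : G, ∀ v ∈ LinearMap.ker M.mulVecLin,
        (σ g : Matrix (Fin m) (Fin m) ℂ).mulVec v ∈ LinearMap.ker M.mulVecLin := by
      intro g v hv
      simp only [LinearMap.mem_ker, Matrix.mulVecLin_apply] at hv ⊢
      rw [hmulvec g v, hv, Matrix.mulVec_zero]
    have hinv2 : ∀ g : G, ∀ v ∈ LinearMap.range M.mulVecLin,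
        (ρ g : Matrix (Fin n) (Fin n) ℂ).mulVec v ∈ LinearMap.range M.mulVecLin := by
      rintro g v ⟨w, rfl⟩
      exact ⟨(σ g : Matrix (Fin m) (Fin m) ℂ).mulVec w,
        by rw [Matrix.mulVecLin_apply, Matrix.mulVecLin_apply, hmulvec g w]⟩
    have hker : LinearMap.ker M.mulVecLin = ⊥ := by
      rcases hirrσ (LinearMap.ker M.mulVecLin) hinv1 with h | h
      · exact h
      · exfalso
        apply hM
        ext a b
        have h0 : M.mulVec (Pi.single b 1) = 0 := by
          have hmem : (Pi.single b 1 : Fin m → ℂ) ∈ LinearMap.ker M.mulVecLin := by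
            rw [h]; trivial
          simpa [Matrix.mulVecLin_apply] using hmem
        have := congr_fun h0 a
        simpa using this
    have hrange : LinearMap.range M.mulVecLin = ⊤ := by
      rcases hirrρ (LinearMap.range M.mulVecLin) hinv2 with h | h
      · exfalso
        apply hM
        ext a b
        have h0 : M.mulVec (Pi.single b 1) = 0 := by
          have hmem : M.mulVec (Pi.single b 1) ∈ LinearMap.range M.mulVecLin :=
            ⟨Pi.single b 1, rfl⟩
          rw [h] at hmem
          simpa using hmem
        have := congr_fun h0 a
        simpa using this
      · exact h
    have hbij : Function.Bijective M.mulVecLin :=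
      ⟨LinearMap.ker_eq_bot.mp hker, LinearMap.range_eq_top.mp hrange⟩
    set e := LinearEquiv.ofBijective M.mulVecLin hbij with he
    apply hnoniso
    refine ⟨e.symm, fun g v => ?_⟩
    apply e.injective
    rw [e.apply_symm_apply]
    have h1 : ∀ w : Fin m → ℂ, e w = M.mulVec w := fun w => rfl
    rw [h1, Matrix.mulVec_mulVec, ← hcomm g, ← Matrix.mulVec_mulVec]
    have h2 : M.mulVec (e.symm v) = e (e.symm v) := rfl
    rw [h2, e.apply_symm_apply]
  have hfin := congr_fun (congr_fun hM0 α) β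
  rw [hMentry] at hfin
  simpa using hfin
end

section
/- Superficial degree of divergence bound: suppose non-negative integers L, I_A, I_χ, Ĩ, Ẽ, E_A, E_χ, Ṽ_A, Ṽ_χ and a family V_{ij} (indexed by pairs (i,j) with 3 ≤ i + j ≤ n) satisfy the edge-counting relations 2I_A + E_A = Σ_{ij} i·V_{ij} + Ṽ_A, 2I_χ + E_χ = Σ_{ij} j·V_{ij} + Ṽ_χ, 2Ĩ + Ẽ = 2Ṽ_A + 2Ṽ_χ, and Euler's relation L = I_A + I_χ + Ĩ − Σ_{ij} V_{ij} − Ṽ_A − Ṽ_χ + 1. Define ω := 4L − (I_A + I_χ + Ĩ)(n−2) + Σ_{ij} V_{ij}(n − i − j) + Ṽ_A(n−3) + Ṽ_χ(n−4). Then ω ≤ (4−n)(L−1) + 4 − (E_A + E_χ + Ẽ). -/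
open Finset

/-- Power-counting lemma: the superficial degree of divergence `ω` of a Feynman
graph in the higher-derivative theory of order `n` satisfies
`ω ≤ (4-n)(L-1) + 4 - (E_A + E_χ + Ẽ)`.  Here `IA, Iχ, Igh` count internal
gauge/Higgs/ghost lines, `EA, Eχ, Egh` external lines, and `V, VA, Vχ` the
gauge-Higgs, gauge-ghost and Higgs-ghost vertices. -/
theorem stmt_5 (n : ℕ) (hn : 4 ≤ n)
    (L IA Iχ Igh EA Eχ Egh VA Vχ : ℕ)
    (S : Finset (ℕ × ℕ)) (V : ℕ × ℕ → ℕ)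
    (hS : ∀ p ∈ S, 3 ≤ p.1 + p.2 ∧ p.1 + p.2 ≤ n)
    (h1 : 2 * IA + EA = (∑ p ∈ S, p.1 * V p) + VA)
    (h2 : 2 * Iχ + Eχ = (∑ p ∈ S, p.2 * V p) + Vχ)
    (h3 : 2 * Igh + Egh = 2 * VA + 2 * Vχ)
    (hEuler : (L : ℤ) = (IA : ℤ) + Iχ + Igh - (∑ p ∈ S, (V p : ℤ)) - VA - Vχ + 1)
    (ω : ℤ)
    (hω : ω = 4 * L - ((IA : ℤ) + Iχ + Igh) * ((n : ℤ) - 2)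
      + (∑ p ∈ S, (V p : ℤ) * ((n : ℤ) - p.1 - p.2))
      + (VA : ℤ) * ((n : ℤ) - 3) + (Vχ : ℤ) * ((n : ℤ) - 4)) :
    ω ≤ (4 - (n : ℤ)) * ((L : ℤ) - 1) + 4 - ((EA : ℤ) + Eχ + Egh) := by
  have h1' : (2 * IA + EA : ℤ) = (∑ p ∈ S, (p.1 : ℤ) * V p) + VA := by
    exact_mod_cast congrArg (Nat.cast : ℕ → ℤ) h1
  have h2' : (2 * Iχ + Eχ : ℤ) = (∑ p ∈ S, (p.2 : ℤ) * V p) + Vχ := by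
    exact_mod_cast congrArg (Nat.cast : ℕ → ℤ) h2
  have h3' : (2 * Igh + Egh : ℤ) = 2 * VA + 2 * Vχ := by exact_mod_cast h3
  have hD : (∑ p ∈ S, (V p : ℤ) * ((n : ℤ) - p.1 - p.2))
      = (n : ℤ) * (∑ p ∈ S, (V p : ℤ)) - (∑ p ∈ S, (p.1 : ℤ) * V p)
        - (∑ p ∈ S, (p.2 : ℤ) * V p) := by
    rw [Finset.mul_sum, ← Finset.sum_sub_distrib, ← Finset.sum_sub_distrib]
    exact Finset.sum_congr rfl fun p _ => by ring
  have key : ω = (4 - (n : ℤ)) * ((L : ℤ) - 1) + 4 - ((EA : ℤ) + Eχ + Egh) - Vχ := by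
    linear_combination hω + hD + (n : ℤ) * hEuler + h1' + h2' + h3'
  have : (0 : ℤ) ≤ (Vχ : ℤ) := Int.natCast_nonneg _
  linarith
end
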